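/- MLMC cost bound in the regime b > c (variance decays faster than cost grows): if V_ℓ ≤ c_V M_ℓ^{-b}, C_ℓ ≤ c_C M_ℓ^{c}, and M_ℓ = M_0 · 2^ℓ with b > c > 0, then the sum Σ_{ℓ=0}^L √(V_ℓ C_ℓ) is bounded uniformly in L by √(c_V c_C) M_0^{(c-b)/2} / (1 - 2^{(c-b)/2}), so the dominant MLMC cost term (1/(θε²))(Σ_ℓ √(V_ℓ C_ℓ))² is O(ε^{-2}) with constant independent of L. -/

import Mathlib

/-- MLMC cost bound in the regime `b > c`: if `V_ℓ ≤ c_V M_ℓ^{-b}`,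
`C_ℓ ≤ c_C M_ℓ^c` and `M_ℓ = M_0 2^ℓ` with `b > c > 0`, then
`∑_{ℓ=0}^L √(V_ℓ C_ℓ)` is bounded uniformly in `L` by
`√(c_V c_C) M_0^{(c-b)/2} / (1 - 2^{(c-b)/2})`, so the dominant MLMC cost term
`(1/(θε²))(∑ √(V_ℓ C_ℓ))²` is `O(ε^{-2})` with constant independent of `L`. -/
theorem mlmc_cost_bound_b_gt_c (cV cC b c M0 θ ε : ℝ)
    (hcV : 0 < cV) (hcC : 0 < cC) (hc : 0 < c) (hbc : c < b) (hM0 : 0 < M0)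
    (hθ : θ ∈ Set.Ioo (0 : ℝ) 1) (hε : 0 < ε)
    (M V C : ℕ → ℝ) (hM : ∀ ℓ, M ℓ = M0 * 2 ^ ℓ)
    (hV0 : ∀ ℓ, 0 ≤ V ℓ) (hC0 : ∀ ℓ, 0 ≤ C ℓ)
    (hV : ∀ ℓ, V ℓ ≤ cV * M ℓ ^ (-b : ℝ)) (hC : ∀ ℓ, C ℓ ≤ cC * M ℓ ^ (c : ℝ))
    (L : ℕ) :
    (∑ ℓ ∈ Finset.range (L + 1), Real.sqrt (V ℓ * C ℓ)
        ≤ Real.sqrt (cV * cC) * M0 ^ ((c - b) / 2 : ℝ)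
          / (1 - (2 : ℝ) ^ ((c - b) / 2 : ℝ))) ∧
      (1 / (θ * ε ^ 2)) * (∑ ℓ ∈ Finset.range (L + 1), Real.sqrt (V ℓ * C ℓ)) ^ 2
        ≤ ((Real.sqrt (cV * cC) * M0 ^ ((c - b) / 2 : ℝ)
            / (1 - (2 : ℝ) ^ ((c - b) / 2 : ℝ))) ^ 2 / θ) * ε ^ (-2 : ℝ) := by
  set r : ℝ := (2 : ℝ) ^ ((c - b) / 2 : ℝ) with hr
  have hr0 : 0 < r := Real.rpow_pos_of_pos (by norm_num) _
  have hr1 : r < 1 := by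
    rw [hr]
    have h : ((c - b) / 2 : ℝ) < 0 := by linarith
    calc (2:ℝ) ^ ((c - b) / 2 : ℝ) < 2 ^ (0:ℝ) :=
      Real.rpow_lt_rpow_left_iff (by norm_num) |>.mpr h
    _ = 1 := Real.rpow_zero 2
  have h1r : 0 < 1 - r := by linarith
  have hMpos : ∀ ℓ : ℕ, 0 < M ℓ := fun ℓ => by
    rw [hM ℓ]; positivity
  have key : ∀ ℓ : ℕ, (M ℓ) ^ ((c - b) / 2 : ℝ) = M0 ^ ((c - b) / 2 : ℝ) * r ^ ℓ := by
    intro ℓ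
    rw [hM, Real.mul_rpow hM0.le (by positivity)]
    congr 1
    rw [← Real.rpow_natCast (2:ℝ) ℓ, ← Real.rpow_mul (by norm_num : (0:ℝ) ≤ 2), hr,
      ← Real.rpow_natCast ((2:ℝ) ^ ((c - b) / 2 : ℝ)) ℓ,
      ← Real.rpow_mul (by norm_num : (0:ℝ) ≤ 2)]
    ring_nf
  have hterm : ∀ ℓ : ℕ, Real.sqrt (V ℓ * C ℓ) ≤
      Real.sqrt (cV * cC) * M0 ^ ((c - b) / 2 : ℝ) * r ^ ℓ := by
    intro ℓ
    have h1 : V ℓ * C ℓ ≤ (cV * cC) * M ℓ ^ ((c - b) : ℝ) := by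
      have hmm := mul_le_mul (hV ℓ) (hC ℓ) (hC0 ℓ)
        (mul_nonneg hcV.le (Real.rpow_nonneg (hMpos ℓ).le _))
      calc V ℓ * C ℓ ≤ cV * M ℓ ^ (-b : ℝ) * (cC * M ℓ ^ (c : ℝ)) := hmm
        _ = (cV * cC) * (M ℓ ^ (-b : ℝ) * M ℓ ^ (c : ℝ)) := by ring
        _ = (cV * cC) * M ℓ ^ ((c - b) : ℝ) := by
            rw [← Real.rpow_add (hMpos ℓ)]; ring_nf
    have h2 : Real.sqrt (V ℓ * C ℓ) ≤ Real.sqrt ((cV * cC) * M ℓ ^ ((c - b) : ℝ)) :=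
      Real.sqrt_le_sqrt h1
    refine h2.trans_eq ?_
    rw [Real.sqrt_mul (by positivity), Real.sqrt_eq_rpow (M ℓ ^ ((c - b) : ℝ)),
      ← Real.rpow_mul (hMpos ℓ).le,
      (by ring : (c - b) * (1/2) = (c - b) / 2), key ℓ]
    ring
  have hsum : ∑ ℓ ∈ Finset.range (L + 1), Real.sqrt (V ℓ * C ℓ)
      ≤ Real.sqrt (cV * cC) * M0 ^ ((c - b) / 2 : ℝ) / (1 - r) := by
    calc ∑ ℓ ∈ Finset.range (L + 1), Real.sqrt (V ℓ * C ℓ)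
        ≤ ∑ ℓ ∈ Finset.range (L + 1),
            Real.sqrt (cV * cC) * M0 ^ ((c - b) / 2 : ℝ) * r ^ ℓ :=
          Finset.sum_le_sum fun ℓ _ => hterm ℓ
      _ = Real.sqrt (cV * cC) * M0 ^ ((c - b) / 2 : ℝ) *
            ∑ ℓ ∈ Finset.range (L + 1), r ^ ℓ := by rw [Finset.mul_sum]
      _ ≤ Real.sqrt (cV * cC) * M0 ^ ((c - b) / 2 : ℝ) * (1 / (1 - r)) := by
          refine mul_le_mul_of_nonneg_left ?_ (by positivity)
          rw [geom_sum_eq (ne_of_lt hr1) (L + 1),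
            (by rw [← neg_div_neg_eq]; ring_nf :
              (r ^ (L + 1) - 1) / (r - 1) = (1 - r ^ (L + 1)) / (1 - r))]
          gcongr
          nlinarith [pow_pos hr0 (L + 1)]
      _ = Real.sqrt (cV * cC) * M0 ^ ((c - b) / 2 : ℝ) / (1 - r) := by ring
  refine ⟨hsum, ?_⟩
  obtain ⟨hθ0, hθ1⟩ := hθ
  have hε2 : ε ^ (-2 : ℝ) = 1 / ε ^ 2 := by
    rw [Real.rpow_neg (le_of_lt hε), ← Real.rpow_natCast ε 2]
    norm_num
  rw [hε2]
  have hS0 : 0 ≤ ∑ ℓ ∈ Finset.range (L + 1), Real.sqrt (V ℓ * C ℓ) :=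
    Finset.sum_nonneg fun ℓ _ => Real.sqrt_nonneg _
  have hsq : (∑ ℓ ∈ Finset.range (L + 1), Real.sqrt (V ℓ * C ℓ)) ^ 2
      ≤ (Real.sqrt (cV * cC) * M0 ^ ((c - b) / 2 : ℝ) / (1 - r)) ^ 2 :=
    pow_le_pow_left₀ hS0 hsum 2
  calc (1 / (θ * ε ^ 2)) * (∑ ℓ ∈ Finset.range (L + 1), Real.sqrt (V ℓ * C ℓ)) ^ 2
      ≤ (1 / (θ * ε ^ 2)) *
          (Real.sqrt (cV * cC) * M0 ^ ((c - b) / 2 : ℝ) / (1 - r)) ^ 2 := by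
        exact mul_le_mul_of_nonneg_left hsq (by positivity)
    _ = (Real.sqrt (cV * cC) * M0 ^ ((c - b) / 2 : ℝ) / (1 - r)) ^ 2 / θ
          * (1 / ε ^ 2) := by
        field_simp
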